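/- arXiv:2202.07216 — 5 statements merged into one kernel-verified Lean document; each statement's English description precedes it below -/
import Mathlib

section
/- Let f : [0,1]^n → [0,1] be continuous and polynomially bounded. Then there exists an integer t0 such that for all integers t ≥ t0 and all p ∈ [0,1]^n it holds that f(p) − (1/4)·P_p[f(X̄_t) ≥ 1/2] ≥ (1/8)·f(p). -/
open Finset

def cube (n : ℕ) : Set (Fin n → ℝ) := {p | ∀ i, 0 ≤ p i ∧ p i ≤ 1}

/-- The open face `F_{A,S,B}` of the hypercube, where `S` is the complement of `A ∪ B`. -/
def face {n : ℕ} (A B : Finset (Fin n)) : Set (Fin n → ℝ) :=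
  {p | (∀ i ∈ A, p i = 0) ∧ (∀ i ∈ B, p i = 1) ∧ ∀ i ∉ A ∪ B, 0 < p i ∧ p i < 1}

/-- `(1-p)^A · (p(1-p))^S · p^B` for the face `F_{A,S,B}`. -/
noncomputable def facePoly {n : ℕ} (A B : Finset (Fin n)) (p : Fin n → ℝ) : ℝ :=
  (∏ i ∈ A, (1 - p i)) * (∏ i ∈ (A ∪ B)ᶜ, p i * (1 - p i)) * (∏ i ∈ B, p i)
/-- A function `f : [0,1]^n → [0,1]` is polynomially bounded. -/
def PolyBounded {n : ℕ} (f : (Fin n → ℝ) → ℝ) : Prop :=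
  ∃ (m : ℕ) (c : ℝ), 0 < c ∧ ∀ A B : Finset (Fin n), Disjoint A B →
    (¬ ∀ q ∈ face A B, f q = 0) →
    ∀ p ∈ cube n, c * facePoly A B p ^ m ≤ f p
/-- Probability weight of a realization `x` of `t` flips of the `n` coins `p`. -/
noncomputable def flipWeight {n t : ℕ} (p : Fin n → ℝ) (x : Fin t → Fin n → Bool) : ℝ :=
  ∏ s, ∏ i, if x s i then p i else 1 - p i

/-- `P_p[E]`, the probability of the event `E` for `t` i.i.d. flips of the `n` coins `p`. -/
noncomputable def coinProb {n : ℕ} (t : ℕ) (p : Fin n → ℝ)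
    (E : Set (Fin t → Fin n → Bool)) : ℝ :=
  ∑ x : Fin t → Fin n → Bool, Set.indicator E (flipWeight p) x

/-- The empirical average `X̄_t` of the coin flips `x`. -/
noncomputable def empAvg {n : ℕ} (t : ℕ) (x : Fin t → Fin n → Bool) : Fin n → ℝ :=
  fun i => (∑ s, if x s i then (1 : ℝ) else 0) / t

/-!
If `f p ≥ 3/8` the claim follows from `P_p[f(X̄_t) ≥ 1/2] ≤ 1`, so the point is that
`P_p[f(X̄_t) ≥ 1/2] ≤ f p` when `f p < 3/8` and `t` is large. Fix `η` such that `f` moves by at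
most `1/8` between points at sup-distance `≤ η`. If `f(X̄_t) ≥ 1/2`, then `X̄_t` is `η`-far from `p`
in some coordinate `j`, and snapping every coordinate of `X̄_t` that lies within `η` of `0` or `1`
to that endpoint gives a point of a face `F_{A,S,B}` on which `f` does not vanish, so that
`c · facePoly A B p ^ m ≤ f p`. The event "`X̄_t` snaps to this face and is far from `p` in
coordinate `j`" is a product over the coordinates; each factor is bounded by a constant times the
matching factor `1 - p_i`, `p_i (1 - p_i)` or `p_i` of `facePoly A B p` to the power `m`, and the
`j`-th one by `o(1)` times it (Chebyshev). Summing over the `3^n · n` choices of face and coordinate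
gives `P_p[f(X̄_t) ≥ 1/2] ≤ o(1) · f p / c`.
-/

section Bernoulli

variable {t : ℕ} {q : ℝ}

noncomputable def bernWeight (t : ℕ) (q : ℝ) (y : Fin t → Bool) : ℝ :=
  ∏ s, if y s then q else 1 - q

noncomputable def bernProb (t : ℕ) (q : ℝ) (E : Set (Fin t → Bool)) : ℝ :=
  ∑ y, E.indicator (bernWeight t q) y

def trueCount (y : Fin t → Bool) : ℕ := #{s | y s = true}

noncomputable def freq (y : Fin t → Bool) : ℝ := trueCount y / t

lemma trueCount_le (y : Fin t → Bool) : trueCount y ≤ t :=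
  (card_filter_le _ _).trans_eq (by simp)

lemma bernWeight_nonneg (hq0 : 0 ≤ q) (hq1 : q ≤ 1) (y : Fin t → Bool) :
    0 ≤ bernWeight t q y :=
  prod_nonneg fun s _ => by split <;> linarith

lemma bernWeight_eq_pow_mul_pow (y : Fin t → Bool) :
    bernWeight t q y = q ^ trueCount y * (1 - q) ^ (t - trueCount y) := by
  have hfalse : #{s | ¬y s = true} = t - trueCount y := by
    have := card_filter_add_card_filter_not (s := univ) fun s => y s = true
    simp only [card_univ, Fintype.card_fin] at this
    rw [trueCount]
    omega
  rw [bernWeight, prod_ite, prod_const, prod_const, hfalse, trueCount]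

lemma sum_bernWeight_mul_prod (φ : Fin t → Bool → ℝ) :
    ∑ y, bernWeight t q y * ∏ s, φ s (y s) =
      ∏ s, (q * φ s true + (1 - q) * φ s false) := by
  simp only [bernWeight, ← prod_mul_distrib]
  rw [← Fintype.prod_sum fun s (b : Bool) => (if b then q else 1 - q) * φ s b]
  simp

lemma sum_bernWeight (t : ℕ) (q : ℝ) : ∑ y, bernWeight t q y = 1 := by
  simpa using sum_bernWeight_mul_prod (t := t) (q := q) fun _ _ => 1

lemma sum_bernWeight_mul_apply_mul_apply (φ : Bool → ℝ) (s s' : Fin t) :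
    ∑ y, bernWeight t q y * (φ (y s) * φ (y s')) =
      if s = s' then q * φ true ^ 2 + (1 - q) * φ false ^ 2
      else (q * φ true + (1 - q) * φ false) ^ 2 := by
  set χ : Fin t → Bool → ℝ := fun σ b =>
    (if σ = s then φ b else 1) * (if σ = s' then φ b else 1)
  have hprod : ∀ y : Fin t → Bool, φ (y s) * φ (y s') = ∏ σ, χ σ (y σ) := by
    intro y
    simp only [χ, prod_mul_distrib, Fintype.prod_ite_eq']
  rw [sum_congr rfl fun y _ => congrArg _ (hprod y), sum_bernWeight_mul_prod]
  split_ifs with hss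
  · subst hss
    rw [Fintype.prod_eq_single s fun σ hσ => by simp [χ, hσ]]
    simp [χ]
    ring
  · rw [prod_eq_mul s s' hss (fun σ _ hσ => by simp [χ, hσ]) (by simp) (by simp)]
    simp [χ, hss, Ne.symm hss]
    ring

lemma sum_bernWeight_mul_sq (t : ℕ) (q : ℝ) :
    ∑ y, bernWeight t q y * ((trueCount y : ℝ) - q * t) ^ 2 = t * (q * (1 - q)) := by
  set c : Bool → ℝ := fun b => (if b then 1 else 0) - q
  have hcenter : ∀ y : Fin t → Bool, (trueCount y : ℝ) - q * t = ∑ s, c (y s) := by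
    intro y
    rw [trueCount, natCast_card_filter, sum_sub_distrib]
    simp [mul_comm]
  have hcov : ∀ s s' : Fin t,
      ∑ y, bernWeight t q y * (c (y s) * c (y s')) = if s = s' then q * (1 - q) else 0 := by
    intro s s'
    rw [sum_bernWeight_mul_apply_mul_apply]
    split_ifs <;> simp [c] <;> ring
  simp_rw [hcenter, sq, sum_mul_sum, mul_sum]
  rw [sum_comm]
  simp_rw [sum_comm (s := univ (α := Fin t → Bool)), hcov]
  simp

lemma bernProb_nonneg (hq0 : 0 ≤ q) (hq1 : q ≤ 1) (E : Set (Fin t → Bool)) :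
    0 ≤ bernProb t q E :=
  sum_nonneg fun y _ => Set.indicator_nonneg (fun y _ => bernWeight_nonneg hq0 hq1 y) y

lemma bernProb_mono (hq0 : 0 ≤ q) (hq1 : q ≤ 1) {E F : Set (Fin t → Bool)} (h : E ⊆ F) :
    bernProb t q E ≤ bernProb t q F :=
  sum_le_sum fun y _ =>
    Set.indicator_le_indicator_of_subset h (fun y => bernWeight_nonneg hq0 hq1 y) y

lemma bernProb_univ (t : ℕ) (q : ℝ) : bernProb t q Set.univ = 1 := by
  simp [bernProb, sum_bernWeight]

lemma bernProb_le_one (hq0 : 0 ≤ q) (hq1 : q ≤ 1) (E : Set (Fin t → Bool)) :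
    bernProb t q E ≤ 1 :=
  (bernProb_mono hq0 hq1 (Set.subset_univ E)).trans_eq (bernProb_univ t q)

lemma bernProb_le_two_pow_mul {E : Set (Fin t → Bool)} {b : ℝ} (hb : 0 ≤ b)
    (h : ∀ y ∈ E, bernWeight t q y ≤ b) : bernProb t q E ≤ 2 ^ t * b := by
  refine (sum_le_card_nsmul _ _ b fun y _ => ?_).trans_eq (by simp)
  by_cases hy : y ∈ E
  · simpa [Set.indicator_of_mem hy] using h y hy
  · simpa [Set.indicator_of_notMem hy] using hb

lemma bernProb_le_abs_freq_sub_le (hq0 : 0 ≤ q) (hq1 : q ≤ 1) {η : ℝ} (hη : 0 < η)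
    (ht : 0 < t) : bernProb t q {y | η ≤ |freq y - q|} ≤ 1 / (4 * η ^ 2 * t) := by
  have ht' : (0 : ℝ) < t := by exact_mod_cast ht
  have hpt : ∀ y, {y | η ≤ |freq y - q|}.indicator (bernWeight t q) y ≤
      bernWeight t q y * ((trueCount y - q * t) ^ 2 / (η * t) ^ 2) := by
    intro y
    have hw := bernWeight_nonneg hq0 hq1 y
    by_cases hy : y ∈ {y | η ≤ |freq y - q|}
    · rw [Set.indicator_of_mem hy]
      refine le_mul_of_one_le_right hw ?_
      rw [one_le_div (by positivity), ← sq_abs (_ - _)]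
      have : |(trueCount y : ℝ) - q * t| = |freq y - q| * t := by
        rw [← abs_of_pos ht', ← abs_mul, abs_of_pos ht', sub_mul, freq,
          div_mul_cancel₀ _ ht'.ne']
      rw [this]
      gcongr
      exact hy
    · rw [Set.indicator_of_notMem hy]
      positivity
  calc bernProb t q _
        ≤ ∑ y, bernWeight t q y * ((trueCount y - q * t) ^ 2 / (η * t) ^ 2) :=
        sum_le_sum fun y _ => hpt y
    _ = t * (q * (1 - q)) / (η * t) ^ 2 := by
        simp_rw [← mul_div_assoc, ← sum_div, sum_bernWeight_mul_sq]
    _ ≤ 1 / (4 * η ^ 2 * t) := by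
        rw [div_le_div_iff₀ (by positivity) (by positivity)]
        nlinarith [sq_nonneg (q - 1 / 2), sq_nonneg η, mul_pos ht' ht']

end Bernoulli

section Region

variable {η : ℝ}

/-- Chosen so that `kappa η ^ (η * t / 2) = 4 ^ (-t)`. -/
noncomputable def kappa (η : ℝ) : ℝ := (1 / 4 : ℝ) ^ (2 / η)

lemma kappa_pos (η : ℝ) : 0 < kappa η := by
  unfold kappa
  positivity

lemma kappa_le_half (hη : 0 < η) (hη2 : η ≤ 1 / 2) : kappa η ≤ 1 / 2 := by
  have h1 : (1 : ℝ) ≤ 2 / η := by rw [le_div_iff₀ hη]; linarith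
  calc kappa η ≤ (1 / 4 : ℝ) ^ (1 : ℝ) :=
        Real.rpow_le_rpow_of_exponent_ge (by norm_num) (by norm_num) h1
    _ ≤ 1 / 2 := by norm_num

lemma pow_le_pow_div_four_pow (hη : 0 < η) {r : ℝ} (hr0 : 0 ≤ r) (hr : r ≤ kappa η)
    {k m t : ℕ} (hk : η * t ≤ k) (htm : 2 * m ≤ η * t) : r ^ k ≤ r ^ m / 4 ^ t := by
  have hmk : m ≤ k := by
    have : (m : ℝ) ≤ k := by linarith [(Nat.cast_nonneg m : (0 : ℝ) ≤ m)]
    exact_mod_cast this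
  have hexp : (t : ℝ) ≤ 2 / η * (k - m : ℕ) := by
    rw [Nat.cast_sub hmk, div_mul_eq_mul_div, le_div_iff₀ hη]
    linarith
  have hκ : kappa η ^ (k - m) ≤ 1 / 4 ^ t := by
    calc kappa η ^ (k - m) = (1 / 4 : ℝ) ^ (2 / η * (k - m : ℕ)) := by
          rw [kappa, ← Real.rpow_natCast, ← Real.rpow_mul (by norm_num)]
      _ ≤ (1 / 4 : ℝ) ^ (t : ℝ) :=
          Real.rpow_le_rpow_of_exponent_ge (by norm_num) (by norm_num) hexp
      _ = 1 / 4 ^ t := by rw [Real.rpow_natCast, one_div_pow]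
  calc r ^ k = r ^ m * r ^ (k - m) := by rw [← pow_add, Nat.add_sub_cancel' hmk]
    _ ≤ r ^ m * (1 / 4 ^ t) := by gcongr; exact (pow_le_pow_left₀ hr0 hr _).trans hκ
    _ = r ^ m / 4 ^ t := by ring

/-- The face a coordinate `r ∈ [0, 1]` is snapped to: `0` encodes `r = 0`, `1` the open interval
and `2` encodes `r = 1`. -/
noncomputable def region (η r : ℝ) : Fin 3 :=
  if r ≤ η then 0 else if 1 - η ≤ r then 2 else 1

noncomputable def facePolyFactor (v : Fin 3) (r : ℝ) : ℝ := ![1 - r, r * (1 - r), r] v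

noncomputable def roundToFace (η r : ℝ) : ℝ := ![0, r, 1] (region η r)

lemma region_eq_zero_iff {r : ℝ} : region η r = 0 ↔ r ≤ η := by
  unfold region
  split_ifs <;> simp_all

lemma region_eq_one_iff {r : ℝ} : region η r = 1 ↔ η < r ∧ r < 1 - η := by
  unfold region
  split_ifs <;> simp_all
  linarith

lemma region_eq_two_iff {r : ℝ} : region η r = 2 ↔ η < r ∧ 1 - η ≤ r := by
  unfold region
  split_ifs <;> simp_all

lemma le_of_region_ne_two (hη2 : η ≤ 1 / 2) {r : ℝ} (h : region η r ≠ 2) : r ≤ 1 - η := by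
  rw [Ne, region_eq_two_iff, not_and, not_le] at h
  rcases le_or_gt r η with hr | hr
  · linarith
  · exact (h hr).le

lemma facePolyFactor_nonneg (v : Fin 3) {r : ℝ} (hr0 : 0 ≤ r) (hr1 : r ≤ 1) :
    0 ≤ facePolyFactor v r := by
  fin_cases v <;> simp [facePolyFactor] <;> nlinarith

lemma abs_roundToFace_sub_le {r : ℝ} (hr0 : 0 ≤ r) (hr1 : r ≤ 1) (hη : 0 ≤ η) :
    |roundToFace η r - r| ≤ η := by
  unfold roundToFace region
  split_ifs <;> simp [abs_le, hη] <;> constructor <;> linarith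

lemma roundToFace_mem_Icc {r : ℝ} (hr0 : 0 ≤ r) (hr1 : r ≤ 1) :
    roundToFace η r ∈ Set.Icc 0 1 := by
  unfold roundToFace region
  split_ifs <;> simp [hr0, hr1]

end Region

section RegionProb

variable {t m : ℕ} {q η : ℝ}

lemma le_trueCount_of_region_ne_zero (ht : 0 < t) {y : Fin t → Bool}
    (h : region η (freq y) ≠ 0) : η * t ≤ trueCount y := by
  rw [Ne, region_eq_zero_iff, not_le, freq, lt_div_iff₀ (by exact_mod_cast ht)] at h
  exact h.le

lemma le_sub_trueCount_of_region_ne_two (hη2 : η ≤ 1 / 2) (ht : 0 < t) {y : Fin t → Bool}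
    (h : region η (freq y) ≠ 2) : η * t ≤ (t - trueCount y : ℕ) := by
  have h1 := le_of_region_ne_two hη2 h
  rw [freq, div_le_iff₀ (by exact_mod_cast ht)] at h1
  rw [Nat.cast_sub (trueCount_le y)]
  linarith

lemma bernProb_le_of_bernWeight_le {E : Set (Fin t → Bool)} {r g : ℝ}
    (hr0 : 0 ≤ r) (hrg : r ≤ 2 * g) (h : ∀ y ∈ E, bernWeight t q y ≤ r ^ m / 4 ^ t) :
    bernProb t q E ≤ 2 ^ m / 2 ^ t * g ^ m := by
  calc bernProb t q E ≤ 2 ^ t * (r ^ m / 4 ^ t) := bernProb_le_two_pow_mul (by positivity) h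
    _ = r ^ m / 2 ^ t := by
        rw [show (4 : ℝ) ^ t = 2 ^ t * 2 ^ t by rw [← mul_pow]; norm_num]
        field_simp
    _ ≤ (2 * g) ^ m / 2 ^ t := by gcongr
    _ = 2 ^ m / 2 ^ t * g ^ m := by ring

/-- If `q ≤ kappa η` and the region forces at least `η t` successes, the crude bound
`2 ^ t * q ^ (η t)` is already `≤ 2 ^ (-t) * q ^ m`; symmetrically for `1 - q`. In the remaining
cases `facePolyFactor v q ≥ kappa η / 2`. -/
lemma bernProb_region_inter_le (hη : 0 < η) (hη2 : η ≤ 1 / 2) (hq0 : 0 ≤ q) (hq1 : q ≤ 1)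
    (ht : 0 < t) (htm : 2 * m ≤ η * t) (v : Fin 3) (F : Set (Fin t → Bool)) :
    bernProb t q ({y | region η (freq y) = v} ∩ F) ≤
      (2 ^ m / 2 ^ t + (2 / kappa η) ^ m * bernProb t q F) * facePolyFactor v q ^ m := by
  have hκ := kappa_pos η
  have hκ2 := kappa_le_half hη hη2
  have hF := bernProb_nonneg hq0 hq1 F
  have hg := facePolyFactor_nonneg v hq0 hq1
  have hsplit : 2 ^ m / 2 ^ t * facePolyFactor v q ^ m ≤
      (2 ^ m / 2 ^ t + (2 / kappa η) ^ m * bernProb t q F) * facePolyFactor v q ^ m := by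
    gcongr
    exact le_add_of_nonneg_right (by positivity)
  by_cases hlow : q ≤ kappa η ∧ v ≠ 0
  · refine (bernProb_le_of_bernWeight_le hq0 ?_ fun y hy => ?_).trans hsplit
    · fin_cases v <;> simp_all [facePolyFactor] <;> nlinarith
    · calc bernWeight t q y ≤ q ^ trueCount y := by
            rw [bernWeight_eq_pow_mul_pow]
            exact mul_le_of_le_one_right (by positivity)
              (pow_le_one₀ (by linarith) (by linarith))
        _ ≤ q ^ m / 4 ^ t := pow_le_pow_div_four_pow hη hq0 hlow.1
            (le_trueCount_of_region_ne_zero ht (hy.1.trans_ne hlow.2)) htm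
  by_cases hhigh : 1 - q ≤ kappa η ∧ v ≠ 2
  · refine (bernProb_le_of_bernWeight_le (sub_nonneg.2 hq1) ?_ fun y hy => ?_).trans hsplit
    · fin_cases v <;> simp_all [facePolyFactor] <;> nlinarith
    · calc bernWeight t q y ≤ (1 - q) ^ (t - trueCount y) := by
            rw [bernWeight_eq_pow_mul_pow]
            exact mul_le_of_le_one_left (by have := sub_nonneg.2 hq1; positivity)
              (pow_le_one₀ hq0 hq1)
        _ ≤ (1 - q) ^ m / 4 ^ t := pow_le_pow_div_four_pow hη (by linarith) hhigh.1
            (le_sub_trueCount_of_region_ne_two hη2 ht (hy.1.trans_ne hhigh.2)) htm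
  have hbig : 1 ≤ 2 / kappa η * facePolyFactor v q := by
    rw [div_mul_eq_mul_div, le_div_iff₀ hκ]
    rw [not_and_or, not_le, not_ne_iff] at hlow hhigh
    fin_cases v <;> simp_all [facePolyFactor] <;> nlinarith
  calc bernProb t q _ ≤ bernProb t q F := bernProb_mono hq0 hq1 Set.inter_subset_right
    _ ≤ bernProb t q F * (2 / kappa η * facePolyFactor v q) ^ m :=
        le_mul_of_one_le_right hF (one_le_pow₀ hbig)
    _ ≤ _ := by
        rw [mul_pow, add_mul]
        nlinarith [show 0 ≤ 2 ^ m / 2 ^ t * facePolyFactor v q ^ m by positivity]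

end RegionProb

section Cube

variable {n t : ℕ} {p : Fin n → ℝ}

lemma cube_eq_Icc (n : ℕ) : cube n = Set.Icc 0 1 := by
  ext p
  simp [cube, Pi.le_def, forall_and]

lemma flipWeight_nonneg (hp : p ∈ cube n) (x : Fin t → Fin n → Bool) : 0 ≤ flipWeight p x :=
  prod_nonneg fun _ _ => prod_nonneg fun i _ => by
    have := hp i
    split <;> linarith

lemma flipWeight_eq_prod_bernWeight (x : Fin t → Fin n → Bool) :
    flipWeight p x = ∏ i, bernWeight t (p i) (x · i) :=
  prod_comm

lemma coinProb_nonneg (hp : p ∈ cube n) (E : Set (Fin t → Fin n → Bool)) : 0 ≤ coinProb t p E :=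
  sum_nonneg fun x _ => Set.indicator_nonneg (fun x _ => flipWeight_nonneg hp x) x

lemma coinProb_mono (hp : p ∈ cube n) {E F : Set (Fin t → Fin n → Bool)} (h : E ⊆ F) :
    coinProb t p E ≤ coinProb t p F :=
  sum_le_sum fun x _ => Set.indicator_le_indicator_of_subset h (fun x => flipWeight_nonneg hp x) x

lemma coinProb_le_sum {ι : Type*} (hp : p ∈ cube n) {E : Set (Fin t → Fin n → Bool)}
    (A : Finset ι) (F : ι → Set (Fin t → Fin n → Bool)) (h : ∀ x ∈ E, ∃ a ∈ A, x ∈ F a) :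
    coinProb t p E ≤ ∑ a ∈ A, coinProb t p (F a) := by
  simp only [coinProb]
  rw [sum_comm]
  refine sum_le_sum fun x _ => ?_
  by_cases hx : x ∈ E
  · obtain ⟨a, ha, hxa⟩ := h x hx
    rw [Set.indicator_of_mem hx, ← Set.indicator_of_mem hxa (flipWeight p)]
    exact single_le_sum (fun a _ => Set.indicator_nonneg (fun x _ => flipWeight_nonneg hp x) x) ha
  · rw [Set.indicator_of_notMem hx]
    exact sum_nonneg fun a _ => Set.indicator_nonneg (fun x _ => flipWeight_nonneg hp x) x

lemma coinProb_pi (E : Fin n → Set (Fin t → Bool)) :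
    coinProb t p {x | ∀ i, (x · i) ∈ E i} = ∏ i, bernProb t (p i) (E i) := by
  have hpt : ∀ x, {x | ∀ i, (x · i) ∈ E i}.indicator (flipWeight p) x =
      ∏ i, (E i).indicator (bernWeight t (p i)) (x · i) := by
    classical
    intro x
    simp only [Set.indicator_apply, flipWeight_eq_prod_bernWeight, Fintype.prod_ite_zero]
    congr 1
  simp only [coinProb, hpt, bernProb]
  rw [Fintype.prod_sum]
  exact Fintype.sum_equiv (Equiv.piComm fun _ _ => Bool) _ _ fun x => rfl

lemma coinProb_le_one (hp : p ∈ cube n) (E : Set (Fin t → Fin n → Bool)) : coinProb t p E ≤ 1 :=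
  calc coinProb t p E ≤ coinProb t p {x | ∀ i, (x · i) ∈ Set.univ} :=
        coinProb_mono hp fun _ _ i => Set.mem_univ _
    _ = 1 := by simp only [coinProb_pi, bernProb_univ, prod_const_one]

lemma empAvg_apply (x : Fin t → Fin n → Bool) (i : Fin n) : empAvg t x i = freq (x · i) := by
  simp only [empAvg, freq, trueCount, natCast_card_filter]

lemma empAvg_mem_cube (x : Fin t → Fin n → Bool) : empAvg t x ∈ cube n := fun i => by
  rw [empAvg_apply, freq]
  exact ⟨by positivity, div_le_one_of_le₀ (by exact_mod_cast trueCount_le _) (by positivity)⟩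

end Cube

section Faces

variable {n t m : ℕ} {η : ℝ} {p : Fin n → ℝ}

def lowSet (σ : Fin n → Fin 3) : Finset (Fin n) := {i | σ i = 0}

def highSet (σ : Fin n → Fin 3) : Finset (Fin n) := {i | σ i = 2}

lemma disjoint_lowSet_highSet (σ : Fin n → Fin 3) : Disjoint (lowSet σ) (highSet σ) :=
  disjoint_filter.2 fun i _ h0 h2 => by simp [h0] at h2

lemma compl_lowSet_union_highSet (σ : Fin n → Fin 3) :
    (lowSet σ ∪ highSet σ)ᶜ = ({i | σ i = 1} : Finset (Fin n)) := by
  ext i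
  have key : ∀ v : Fin 3, ¬(v = 0 ∨ v = 2) ↔ v = 1 := by decide
  simpa [lowSet, highSet] using key (σ i)

lemma facePoly_lowSet_highSet (σ : Fin n → Fin 3) (p : Fin n → ℝ) :
    facePoly (lowSet σ) (highSet σ) p = ∏ i, facePolyFactor (σ i) (p i) := by
  rw [facePoly, compl_lowSet_union_highSet, lowSet, highSet, prod_filter, prod_filter,
    prod_filter, ← prod_mul_distrib, ← prod_mul_distrib]
  refine prod_congr rfl fun i _ => ?_
  generalize σ i = v
  fin_cases v <;> simp [facePolyFactor]

lemma roundToFace_mem_face (hη : 0 ≤ η) (r : Fin n → ℝ) :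
    (fun i => roundToFace η (r i)) ∈
      face (lowSet fun i => region η (r i)) (highSet fun i => region η (r i)) := by
  refine ⟨fun i hi => ?_, fun i hi => ?_, fun i hi => ?_⟩
  · simp_all [lowSet, roundToFace]
  · simp_all [highSet, roundToFace]
  · rw [← mem_compl, compl_lowSet_union_highSet, mem_filter] at hi
    obtain ⟨h1, h2⟩ := region_eq_one_iff.1 hi.2
    simp only [roundToFace, hi.2]
    constructor <;> simp <;> linarith

lemma roundToFace_mem_cube {r : Fin n → ℝ} (hr : r ∈ cube n) :
    (fun i => roundToFace η (r i)) ∈ cube n :=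
  fun i => roundToFace_mem_Icc (hr i).1 (hr i).2

def regionFarEvent (t : ℕ) (η : ℝ) (p : Fin n → ℝ) (σ : Fin n → Fin 3) (j : Fin n) :
    Set (Fin t → Fin n → Bool) :=
  {x | ∀ i, region η (freq (x · i)) = σ i ∧ (i = j → η ≤ |freq (x · i) - p i|)}

lemma coinProb_regionFarEvent_le (hη : 0 < η) (hη2 : η ≤ 1 / 2) (hp : p ∈ cube n) (ht : 0 < t)
    (htm : 2 * m ≤ η * t) (σ : Fin n → Fin 3) (j : Fin n) :
    coinProb t p (regionFarEvent t η p σ j) ≤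
      (2 ^ m / 2 ^ t + (2 / kappa η) ^ m / (4 * η ^ 2 * t)) * (2 ^ m + (2 / kappa η) ^ m) ^ n *
        facePoly (lowSet σ) (highSet σ) p ^ m := by
  set K := (2 / kappa η) ^ m
  have hK : 0 ≤ K := by have := kappa_pos η; positivity
  set F : Fin n → Set (Fin t → Bool) := fun i => {y | i = j → η ≤ |freq y - p i|}
  set a : Fin n → ℝ := fun i => 2 ^ m / 2 ^ t + K * bernProb t (p i) (F i)
  have ha0 : ∀ i, 0 ≤ a i := fun i => by
    have := bernProb_nonneg (hp i).1 (hp i).2 (F i)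
    positivity
  have ha : ∀ i, a i ≤ 2 ^ m + K := fun i =>
    add_le_add (div_le_self (by positivity) (one_le_pow₀ one_le_two))
      (mul_le_of_le_one_right hK (bernProb_le_one (hp i).1 (hp i).2 _))
  have haj : a j ≤ 2 ^ m / 2 ^ t + K / (4 * η ^ 2 * t) := by
    rw [div_eq_mul_one_div K]
    refine add_le_add_right (mul_le_mul_of_nonneg_left ?_ hK) _
    exact (bernProb_mono (hp j).1 (hp j).2 fun y (hy : y ∈ F j) => hy rfl).trans
      (bernProb_le_abs_freq_sub_le (hp j).1 (hp j).2 hη ht)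
  have hprod : ∏ i, a i ≤ (2 ^ m / 2 ^ t + K / (4 * η ^ 2 * t)) * (2 ^ m + K) ^ n := by
    rw [← mul_prod_erase univ a (mem_univ j)]
    gcongr
    · exact prod_nonneg fun i _ => ha0 i
    · refine (prod_le_prod (fun i _ => ha0 i) fun i _ => ha i).trans ?_
      rw [prod_const]
      exact pow_le_pow_right₀ (le_add_of_le_of_nonneg (one_le_pow₀ one_le_two) hK)
        (card_erase_le.trans_eq (by simp))
  calc coinProb t p _ = ∏ i, bernProb t (p i) ({y | region η (freq y) = σ i} ∩ F i) :=
        coinProb_pi fun i => {y | region η (freq y) = σ i} ∩ F i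
    _ ≤ ∏ i, a i * facePolyFactor (σ i) (p i) ^ m :=
        prod_le_prod (fun i _ => bernProb_nonneg (hp i).1 (hp i).2 _) fun i _ =>
          bernProb_region_inter_le hη hη2 (hp i).1 (hp i).2 ht htm (σ i) (F i)
    _ = (∏ i, a i) * facePoly (lowSet σ) (highSet σ) p ^ m := by
        rw [prod_mul_distrib, facePoly_lowSet_highSet, prod_pow]
    _ ≤ _ := by
        gcongr
        rw [facePoly_lowSet_highSet]
        exact pow_nonneg (prod_nonneg fun i _ => facePolyFactor_nonneg _ (hp i).1 (hp i).2) m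

lemma exists_regionFarEvent {f : (Fin n → ℝ) → ℝ} (hη : 0 ≤ η)
    (hclose : ∀ x ∈ cube n, ∀ y ∈ cube n, (∀ i, |x i - y i| ≤ η) → |f x - f y| ≤ 1 / 8)
    (hp : p ∈ cube n) (hfp : f p < 3 / 8) {x : Fin t → Fin n → Bool}
    (hx : 1 / 2 ≤ f (empAvg t x)) :
    ∃ σ j, (¬ ∀ q ∈ face (lowSet σ) (highSet σ), f q = 0) ∧ x ∈ regionFarEvent t η p σ j := by
  have hr := empAvg_mem_cube x
  obtain ⟨j, hj⟩ : ∃ j, η ≤ |empAvg t x j - p j| := by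
    by_contra! hfar
    have := abs_le.1 (hclose _ hr p hp fun i => (hfar i).le)
    linarith
  refine ⟨fun i => region η (empAvg t x i), j, fun hzero => ?_,
    fun i => ⟨congrArg (region η) (empAvg_apply x i).symm, ?_⟩⟩
  · have := abs_le.1 (hclose _ (roundToFace_mem_cube hr) _ hr fun i =>
      abs_roundToFace_sub_le (hr i).1 (hr i).2 hη)
    rw [hzero _ (roundToFace_mem_face hη _)] at this
    linarith
  · rintro rfl
    rwa [← empAvg_apply]

end Faces

lemma exists_forall_abs_sub_le_of_continuousOn_cube {n : ℕ} {f : (Fin n → ℝ) → ℝ}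
    (hf : ContinuousOn f (cube n)) {ε : ℝ} (hε : 0 < ε) :
    ∃ η, 0 < η ∧ η ≤ 1 / 2 ∧
      ∀ x ∈ cube n, ∀ y ∈ cube n, (∀ i, |x i - y i| ≤ η) → |f x - f y| ≤ ε := by
  have hcpt : IsCompact (cube n) := cube_eq_Icc n ▸ isCompact_Icc
  have huc := hcpt.uniformContinuousOn_of_continuous hf
  obtain ⟨δ, hδ, hδf⟩ := Metric.uniformContinuousOn_iff_le.1 huc ε hε
  refine ⟨min δ (1 / 2), by positivity, min_le_right _ _, fun x hx y hy hxy => ?_⟩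
  have hdist : dist x y ≤ δ := (dist_pi_le_iff hδ.le).2 fun i =>
    (Real.dist_eq _ _).trans_le ((hxy i).trans (min_le_left _ _))
  simpa [Real.dist_eq] using hδf x hx y hy hdist

lemma coinProb_superlevel_le {n t m : ℕ} {f : (Fin n → ℝ) → ℝ} {c η : ℝ} {p : Fin n → ℝ}
    (hc : 0 < c) (hface : ∀ A B : Finset (Fin n), Disjoint A B →
      (¬ ∀ q ∈ face A B, f q = 0) → ∀ p ∈ cube n, c * facePoly A B p ^ m ≤ f p)
    (hη : 0 < η) (hη2 : η ≤ 1 / 2)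
    (hclose : ∀ x ∈ cube n, ∀ y ∈ cube n, (∀ i, |x i - y i| ≤ η) → |f x - f y| ≤ 1 / 8)
    (ht : 0 < t) (htm : 2 * m ≤ η * t) (hp : p ∈ cube n) (hfp0 : 0 ≤ f p) (hfp : f p < 3 / 8) :
    coinProb t p {x | 1 / 2 ≤ f (empAvg t x)} ≤
      3 ^ n * n * ((2 ^ m / 2 ^ t + (2 / kappa η) ^ m / (4 * η ^ 2 * t)) *
        (2 ^ m + (2 / kappa η) ^ m) ^ n) * (f p / c) := by
  classical
  set A : Finset ((Fin n → Fin 3) × Fin n) :=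
    {a | ¬ ∀ q ∈ face (lowSet a.1) (highSet a.1), f q = 0}
  have hκ := kappa_pos η
  have hterm : ∀ a ∈ A, coinProb t p (regionFarEvent t η p a.1 a.2) ≤
      (2 ^ m / 2 ^ t + (2 / kappa η) ^ m / (4 * η ^ 2 * t)) * (2 ^ m + (2 / kappa η) ^ m) ^ n *
        (f p / c) := fun a ha => by
    refine (coinProb_regionFarEvent_le hη hη2 hp ht htm a.1 a.2).trans ?_
    gcongr
    rw [le_div_iff₀' hc]
    exact hface _ _ (disjoint_lowSet_highSet _) (mem_filter.1 ha).2 p hp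
  have hcard : (#A : ℝ) ≤ 3 ^ n * n := by
    have : #A ≤ 3 ^ n * n := (card_filter_le _ _).trans_eq (by simp)
    exact_mod_cast this
  calc coinProb t p {x | 1 / 2 ≤ f (empAvg t x)}
      ≤ ∑ a ∈ A, coinProb t p (regionFarEvent t η p a.1 a.2) :=
        coinProb_le_sum hp _ _ fun x hx => by
          obtain ⟨σ, j, hσ, hxσ⟩ := exists_regionFarEvent hη.le hclose hp hfp hx
          exact ⟨(σ, j), mem_filter.2 ⟨mem_univ _, hσ⟩, hxσ⟩
    _ ≤ #A * ((2 ^ m / 2 ^ t + (2 / kappa η) ^ m / (4 * η ^ 2 * t)) *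
          (2 ^ m + (2 / kappa η) ^ m) ^ n * (f p / c)) := by
        rw [← nsmul_eq_mul]
        exact sum_le_card_nsmul _ _ _ hterm
    _ ≤ _ := by
        rw [← mul_assoc]
        gcongr

open Filter Topology in
lemma exists_coinProb_superlevel_le {n : ℕ} {f : (Fin n → ℝ) → ℝ}
    (hf0 : ∀ p ∈ cube n, 0 ≤ f p) (hcont : ContinuousOn f (cube n)) (hpb : PolyBounded f) :
    ∃ t0 : ℕ, ∀ t ≥ t0, ∀ p ∈ cube n, f p < 3 / 8 →
      coinProb t p {x | 1 / 2 ≤ f (empAvg t x)} ≤ f p := by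
  obtain ⟨m, c, hc, hface⟩ := hpb
  obtain ⟨η, hη, hη2, hclose⟩ :=
    exists_forall_abs_sub_le_of_continuousOn_cube hcont (by norm_num : (0 : ℝ) < 1 / 8)
  have hrate : Tendsto (fun t : ℕ => 3 ^ n * n * ((2 ^ m / 2 ^ t +
      (2 / kappa η) ^ m / (4 * η ^ 2 * t)) * (2 ^ m + (2 / kappa η) ^ m) ^ n)) atTop (𝓝 0) := by
    have h1 : Tendsto (fun t : ℕ => (2 : ℝ) ^ m / 2 ^ t) atTop (𝓝 0) :=
      tendsto_const_nhds.div_atTop (tendsto_pow_atTop_atTop_of_one_lt one_lt_two)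
    have h2 : Tendsto (fun t : ℕ => (2 / kappa η) ^ m / (4 * η ^ 2 * t)) atTop (𝓝 0) :=
      tendsto_const_nhds.div_atTop
        (tendsto_natCast_atTop_atTop.const_mul_atTop (by positivity))
    simpa using ((h1.add h2).mul_const ((2 ^ m + (2 / kappa η) ^ m) ^ n)).const_mul
      ((3 : ℝ) ^ n * n)
  obtain ⟨t0, ht0⟩ := eventually_atTop.1 <| (eventually_gt_atTop 0).and <|
    ((tendsto_natCast_atTop_atTop.const_mul_atTop hη).eventually_ge_atTop (2 * m : ℝ)).and <|
      hrate.eventually_lt_const hc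
  refine ⟨t0, fun t ht p hp hfp => ?_⟩
  obtain ⟨htpos, htm, hsmall⟩ := ht0 t ht
  have hfp0 := hf0 p hp
  calc coinProb t p _ ≤ _ * (f p / c) :=
        coinProb_superlevel_le hc hface hη hη2 hclose htpos htm hp hfp0 hfp
    _ ≤ c * (f p / c) := by gcongr
    _ = f p := mul_div_cancel₀ _ hc.ne'

theorem stmt0 {n : ℕ} (f : (Fin n → ℝ) → ℝ)
    (hrange : ∀ p ∈ cube n, f p ∈ Set.Icc (0 : ℝ) 1)
    (hcont : ContinuousOn f (cube n))
    (hpb : PolyBounded f) :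
    ∃ t0 : ℕ, ∀ t : ℕ, t0 ≤ t → ∀ p ∈ cube n,
      (1 / 8) * f p ≤
        f p - (1 / 4) * coinProb t p {x | 1 / 2 ≤ f (empAvg t x)} := by
  obtain ⟨t0, ht0⟩ := exists_coinProb_superlevel_le (fun p hp => (hrange p hp).1) hcont hpb
  refine ⟨t0, fun t ht p hp => ?_⟩
  have hP0 := coinProb_nonneg hp {x | 1 / 2 ≤ f (empAvg t x)}
  have hP1 := coinProb_le_one hp {x | 1 / 2 ≤ f (empAvg t x)}
  rcases lt_or_ge (f p) (3 / 8) with hsmall | hlarge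
  · linarith [ht0 t ht p hp hsmall]
  · linarith
end

section
/- Let K ⊆ [0,1]^n be compact and let f : K → [0,1] be polynomially bounded on K. Let (A,S,B) be a partition of {1,…,n}. If p ∈ K ∩ F_{A,S,B} and f(p) = 0, then f(q) = 0 for every q ∈ K ∩ cl(F_{A,S,B}), where cl(F_{A,S,B}) = {x ∈ [0,1]^n : x_i = 0 for i ∈ A, x_i = 1 for i ∈ B} is the topological closure of F_{A,S,B}. -/
open Finset

/-- A function `f : K → [0,1]` is polynomially bounded on the compact subdomain `K`. -/
def PolyBoundedOn {n : ℕ} (K : Set (Fin n → ℝ)) (f : (Fin n → ℝ) → ℝ) : Prop :=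
  ∃ (m : ℕ) (c : ℝ), 0 < c ∧ ∀ A B : Finset (Fin n), Disjoint A B →
    (∃ q ∈ K ∩ face A B, 0 < f q) →
    ∀ p ∈ K, c * facePoly A B p ^ m ≤ f p

/-- The topological closure of the open face `F_{A,S,B}`. -/
def clFace {n : ℕ} (A B : Finset (Fin n)) : Set (Fin n → ℝ) :=
  {x ∈ cube n | (∀ i ∈ A, x i = 0) ∧ ∀ i ∈ B, x i = 1}

/-!
A point `q` of the cube lies in the open face `F'` cut out by its own coordinates equal to `0`
and to `1`. If `q` is in the closure of `F = F_{A,S,B}`, then `F'` fixes every coordinate that `F`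
fixes, to the same value, so a point `p ∈ F` keeps each factor of the weight of `F'` strictly
positive. Hence `f q > 0` would force `f p ≥ c · (weight of F' at p)^m > 0`.
-/

section

variable {n : ℕ}

noncomputable def coordsEq (q : Fin n → ℝ) (t : ℝ) : Finset (Fin n) := univ.filter (q · = t)

@[simp]
lemma mem_coordsEq {q : Fin n → ℝ} {t : ℝ} {i : Fin n} : i ∈ coordsEq q t ↔ q i = t := by
  simp [coordsEq]

lemma disjoint_coordsEq (q : Fin n → ℝ) {s t : ℝ} (hst : s ≠ t) :
    Disjoint (coordsEq q s) (coordsEq q t) :=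
  disjoint_left.2 fun _ his hit => hst <| (mem_coordsEq.1 his).symm.trans (mem_coordsEq.1 hit)

lemma mem_face_coordsEq {q : Fin n → ℝ} (hq : q ∈ cube n) :
    q ∈ face (coordsEq q 0) (coordsEq q 1) := by
  refine ⟨fun _ => mem_coordsEq.1, fun _ => mem_coordsEq.1, fun i hi => ?_⟩
  simp only [mem_union, mem_coordsEq, not_or] at hi
  exact ⟨(hq i).1.lt_of_ne' hi.1, (hq i).2.lt_of_ne hi.2⟩

section face

variable {A B : Finset (Fin n)} {p : Fin n → ℝ} {i : Fin n}

lemma pos_of_mem_face (hp : p ∈ face A B) (hi : i ∉ A) : 0 < p i := by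
  by_cases hiB : i ∈ B
  · simp [hp.2.1 i hiB]
  · exact (hp.2.2 i (by simp [hi, hiB])).1

lemma lt_one_of_mem_face (hp : p ∈ face A B) (hi : i ∉ B) : p i < 1 := by
  by_cases hiA : i ∈ A
  · simp [hp.1 i hiA]
  · exact (hp.2.2 i (by simp [hi, hiA])).2

lemma facePoly_pos_of_mem_face {A' B' : Finset (Fin n)} (hA : A ⊆ A') (hB : B ⊆ B')
    (hAB' : Disjoint A' B') (hp : p ∈ face A B) : 0 < facePoly A' B' p := by
  have hA' : ∀ i ∈ A', 0 < 1 - p i := fun i hi =>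
    sub_pos.2 <| lt_one_of_mem_face hp fun hiB => disjoint_left.1 hAB' hi (hB hiB)
  have hB' : ∀ i ∈ B', 0 < p i := fun i hi =>
    pos_of_mem_face hp fun hiA => disjoint_right.1 hAB' hi (hA hiA)
  have hS : ∀ i ∈ (A' ∪ B')ᶜ, 0 < p i * (1 - p i) := by
    intro i hi
    simp only [mem_compl, mem_union, not_or] at hi
    exact mul_pos (pos_of_mem_face hp fun h => hi.1 (hA h))
      (sub_pos.2 <| lt_one_of_mem_face hp fun h => hi.2 (hB h))
  exact mul_pos (mul_pos (prod_pos hA') (prod_pos hS)) (prod_pos hB')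

end face

lemma PolyBoundedOn.pos_of_facePoly_pos {K : Set (Fin n → ℝ)} {f : (Fin n → ℝ) → ℝ}
    (hpb : PolyBoundedOn K f) {A B : Finset (Fin n)} (hAB : Disjoint A B) {q : Fin n → ℝ}
    (hq : q ∈ K ∩ face A B) (hfq : 0 < f q) {p : Fin n → ℝ} (hpK : p ∈ K)
    (hp : 0 < facePoly A B p) : 0 < f p := by
  obtain ⟨m, c, hc, hbound⟩ := hpb
  exact (mul_pos hc (pow_pos hp m)).trans_le (hbound A B hAB ⟨q, hq, hfq⟩ p hpK)

end

theorem stmt8_general {n : ℕ} (K : Set (Fin n → ℝ))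
    (f : (Fin n → ℝ) → ℝ)
    (hrange : ∀ p ∈ K, f p ∈ Set.Icc (0 : ℝ) 1)
    (hpb : PolyBoundedOn K f)
    (A B : Finset (Fin n))
    (p : Fin n → ℝ) (hp : p ∈ K ∩ face A B) (hfp : f p = 0) :
    ∀ q ∈ K ∩ clFace A B, f q = 0 := by
  rintro q ⟨hqK, hqcube, hqA, hqB⟩
  refine ((hrange q hqK).1.eq_or_lt.resolve_right fun hfq => ?_).symm
  have hdisj := disjoint_coordsEq q zero_ne_one
  have hpoly : 0 < facePoly (coordsEq q 0) (coordsEq q 1) p :=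
    facePoly_pos_of_mem_face (fun i hi => mem_coordsEq.2 (hqA i hi))
      (fun i hi => mem_coordsEq.2 (hqB i hi)) hdisj hp.2
  exact (hpb.pos_of_facePoly_pos hdisj ⟨hqK, mem_face_coordsEq hqcube⟩ hfq hp.1 hpoly).ne' hfp

theorem stmt8 {n : ℕ} (K : Set (Fin n → ℝ))
    (hKcube : K ⊆ cube n) (hKcomp : IsCompact K)
    (f : (Fin n → ℝ) → ℝ)
    (hrange : ∀ p ∈ K, f p ∈ Set.Icc (0 : ℝ) 1)
    (hpb : PolyBoundedOn K f)
    (A B : Finset (Fin n)) (hAB : Disjoint A B)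
    (p : Fin n → ℝ) (hp : p ∈ K ∩ face A B) (hfp : f p = 0) :
    ∀ q ∈ K ∩ clFace A B, f q = 0 :=
  stmt8_general K f hrange hpb A B p hp hfp
end

section
/- Let n, k be integers with 1 ≤ k < n and K = {p ∈ [0,1]^n : Σ_{i=1}^n p_i = k}. If p ∈ K and p ≠ e_V for every V ⊆ {1,…,n} with |V| = k, then Σ_{V ⊆ {1,…,n}, |V| = k} g_V(p) > 0. -/
/-!
Let `A = {i | p i = 1}` and `B = {i | 0 < p i}`. Since `∑ p = k` and `0 ≤ p ≤ 1`, we have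
`|A| ≤ k ≤ |B|`, and `|B| = k` would force `p = e_B`; so `|A| ≤ k < |B|`. Any `V` with
`A ⊆ V ⊆ B` and `|V| = k` then has `g_V(p) > 0`: the factors `p i` (`i ∈ V`) and `1 - p i`
(`i ∉ V`) are positive, and `B \ V` contributes a positive `p j` to `∑_{i ∉ V} p i`.
All other `g_U(p)` are nonnegative.
-/

open Finset

/-- The domain `K = {p ∈ [0,1]^n : ∑ i, p i = k}`. -/
def Ksimplex (n k : ℕ) : Set (Fin n → ℝ) :=
  {p | (∀ i, 0 ≤ p i ∧ p i ≤ 1) ∧ ∑ i, p i = (k : ℝ)}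

/-- `g_U(x) = (1/(n-k)) · ∏_{i∈U} x_i · ∏_{i∉U} (1-x_i) · ∑_{i∉U} x_i`. -/
noncomputable def gSampford (n k : ℕ) (U : Finset (Fin n)) (x : Fin n → ℝ) : ℝ :=
  (1 / ((n : ℝ) - (k : ℝ))) * (∏ i ∈ U, x i) * (∏ i ∈ Uᶜ, (1 - x i)) * (∑ i ∈ Uᶜ, x i)

/-- `∑_{V ⊆ [n], |V| = k} g_V(x)`. -/
noncomputable def sumg (n k : ℕ) (x : Fin n → ℝ) : ℝ :=
  ∑ V ∈ Finset.powersetCard k (Finset.univ : Finset (Fin n)), gSampford n k V x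

/-- The indicator vector `e_U` of a subset `U`. -/
def eU {n : ℕ} (U : Finset (Fin n)) : Fin n → ℝ := fun i => if i ∈ U then 1 else 0

section UnitCube

variable {ι : Type*} [Fintype ι] {p : ι → ℝ} {k : ℕ}

theorem card_filter_eq_one_le_of_sum_eq (hp : ∀ i, 0 ≤ p i) (hsum : ∑ i, p i = k) :
    #{i | p i = 1} ≤ k := by
  have h : (#{i | p i = 1} : ℝ) ≤ k := calc
    (#{i | p i = 1} : ℝ) = ∑ i with p i = 1, p i := by
      rw [Finset.sum_congr rfl fun i hi => (mem_filter.mp hi).2]; simp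
    _ ≤ ∑ i, p i := sum_le_sum_of_subset_of_nonneg (subset_univ _) fun i _ _ => hp i
    _ = k := hsum
  exact_mod_cast h

theorem eq_indicator_of_card_filter_pos_le [DecidableEq ι] (hp : ∀ i, 0 ≤ p i ∧ p i ≤ 1)
    (hsum : ∑ i, p i = k) (hB : #{i | 0 < p i} ≤ k) :
    #{i | 0 < p i} = k ∧ p = fun i => if i ∈ ({i | 0 < p i} : Finset ι) then 1 else 0 := by
  set B : Finset ι := {i | 0 < p i}
  have hzero : ∀ i ∉ B, p i = 0 := fun i hi =>
    le_antisymm (not_lt.mp fun h => hi (mem_filter.mpr ⟨mem_univ i, h⟩)) (hp i).1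
  have hsumB : ∑ i ∈ B, p i = k := by
    rw [← hsum]
    exact sum_subset (subset_univ B) fun i _ hi => hzero i hi
  have hle : ∀ i ∈ B, p i ≤ 1 := fun i _ => (hp i).2
  have hcard : (k : ℝ) ≤ #B := by
    simpa [hsumB] using sum_le_sum hle
  have hcardB : #B = k := le_antisymm hB (by exact_mod_cast hcard)
  have hone : ∀ i ∈ B, p i = 1 :=
    (sum_eq_sum_iff_of_le hle).mp (by simp [hsumB, hcardB])
  refine ⟨hcardB, funext fun i => ?_⟩
  by_cases hi : i ∈ B
  · simp [hi, hone i hi]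
  · simp [hi, hzero i hi]

end UnitCube

theorem gSampford_nonneg {n k : ℕ} (hkn : k ≤ n) (U : Finset (Fin n)) {x : Fin n → ℝ}
    (hx : ∀ i, 0 ≤ x i ∧ x i ≤ 1) : 0 ≤ gSampford n k U x := by
  have hnk : (0 : ℝ) ≤ n - k := sub_nonneg.mpr (by exact_mod_cast hkn)
  have h₁ : 0 ≤ ∏ i ∈ U, x i := prod_nonneg fun i _ => (hx i).1
  have h₂ : 0 ≤ ∏ i ∈ Uᶜ, (1 - x i) := prod_nonneg fun i _ => sub_nonneg.mpr (hx i).2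
  have h₃ : 0 ≤ ∑ i ∈ Uᶜ, x i := sum_nonneg fun i _ => (hx i).1
  unfold gSampford
  positivity

theorem gSampford_pos {n k : ℕ} (hkn : k < n) {U : Finset (Fin n)} {x : Fin n → ℝ}
    (hx : ∀ i, 0 ≤ x i) (hU : ∀ i ∈ U, 0 < x i) (hUc : ∀ i ∉ U, x i < 1)
    (hj : ∃ j ∉ U, 0 < x j) : 0 < gSampford n k U x := by
  have hnk : (0 : ℝ) < n - k := sub_pos.mpr (by exact_mod_cast hkn)
  obtain ⟨j, hjU, hj⟩ := hj
  have h₁ : 0 < ∏ i ∈ U, x i := prod_pos hU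
  have h₂ : 0 < ∏ i ∈ Uᶜ, (1 - x i) :=
    prod_pos fun i hi => sub_pos.mpr (hUc i (mem_compl.mp hi))
  have h₃ : 0 < ∑ i ∈ Uᶜ, x i :=
    sum_pos' (fun i _ => hx i) ⟨j, mem_compl.mpr hjU, hj⟩
  unfold gSampford
  positivity

theorem stmt10_general (n k : ℕ)
    (p : Fin n → ℝ) (hp : p ∈ Ksimplex n k)
    (hvert : ∀ V : Finset (Fin n), V.card = k → p ≠ eU V) :
    0 < sumg n k p := by
  obtain ⟨hbd, hsum⟩ := hp
  have hA : #{i | p i = 1} ≤ k := card_filter_eq_one_le_of_sum_eq (fun i => (hbd i).1) hsum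
  have hB : k < #{i | 0 < p i} := by
    by_contra! h
    obtain ⟨hcard, heq⟩ := eq_indicator_of_card_filter_pos_le hbd hsum h
    exact hvert _ hcard heq
  have hAB : ({i | p i = 1} : Finset (Fin n)) ⊆ ({i | 0 < p i} : Finset (Fin n)) := fun i hi =>
    mem_filter.mpr ⟨mem_univ i, (mem_filter.mp hi).2 ▸ one_pos⟩
  obtain ⟨V, hAV, hVB, hV⟩ := exists_subsuperset_card_eq hAB hA hB.le
  have hkn : k < n := (hB.trans_le (card_le_univ _)).trans_eq (Fintype.card_fin n)
  obtain ⟨j, hjB, hjV⟩ := exists_mem_notMem_of_card_lt_card (hV ▸ hB)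
  have hVpos : ∀ i ∈ V, 0 < p i := fun i hi => (mem_filter.mp (hVB hi)).2
  have hVc : ∀ i ∉ V, p i < 1 := fun i hi =>
    (hbd i).2.lt_of_ne fun h => hi (hAV (mem_filter.mpr ⟨mem_univ i, h⟩))
  have hgV : 0 < gSampford n k V p :=
    gSampford_pos hkn (fun i => (hbd i).1) hVpos hVc ⟨j, hjV, (mem_filter.mp hjB).2⟩
  exact sum_pos' (fun U _ => gSampford_nonneg hkn.le U hbd)
    ⟨V, mem_powersetCard.mpr ⟨subset_univ V, hV⟩, hgV⟩

theorem stmt10 (n k : ℕ) (hk : 1 ≤ k) (hkn : k < n)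
    (p : Fin n → ℝ) (hp : p ∈ Ksimplex n k)
    (hvert : ∀ V : Finset (Fin n), V.card = k → p ≠ eU V) :
    0 < sumg n k p :=
  stmt10_general n k p hp hvert
end

section
/- Let n, k be integers with 1 ≤ k < n and K = {p ∈ [0,1]^n : Σ_{i=1}^n p_i = k}. Then for every p ∈ K and every coordinate i ∈ {1,…,n}: Σ_{U ⊆ {1,…,n}, |U| = k, i ∈ U} g_U(p) = p_i · Σ_{V ⊆ {1,…,n}, |V| = k} g_V(p). (Equivalently, Sampford sampling selects each element i with probability exactly p_i.) -/
open Finset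

/-! Write `w(U) = ∏_{u ∈ U} p_u ∏_{u ∉ U} (1 - p_u)`, so that `g_U = w(U) · ∑_{j ∉ U} p_j / (n - k)`.
For `i ∈ U`, `j ∉ U` the exchange `V = U - i + j` satisfies `(1 - p_i) p_j w(U) = p_i (1 - p_j) w(V)`,
and `(U, j) ↦ (V, j)` is a bijection onto the pairs with `i ∉ V`, `j ∈ V`. Summing gives
`(1 - p_i) ∑_{U ∋ i} w(U) ∑_{j ∉ U} p_j = p_i ∑_{V ∌ i} w(V) ∑_{j ∈ V} (1 - p_j)`, and since
`∑ p = k = |V|` the inner sum on the right equals `∑_{j ∉ V} p_j`. Hence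
`∑_{U ∋ i} g_U = p_i ∑_V g_V`. -/

variable {ι R : Type*} [Fintype ι] [DecidableEq ι] [CommRing R]

/-- The probability that including each `u` independently with probability `p u` yields exactly
`U` (Poisson sampling). -/
def poissonWeight (p : ι → R) (U : Finset ι) : R :=
  ∏ u, if u ∈ U then p u else 1 - p u

lemma poissonWeight_eq_prod_mul_prod_compl (p : ι → R) (U : Finset ι) :
    poissonWeight p U = (∏ u ∈ U, p u) * ∏ u ∈ Uᶜ, (1 - p u) := by
  rw [poissonWeight, prod_ite, filter_mem_eq_inter, univ_inter, filter_not, filter_mem_eq_inter,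
    univ_inter, compl_eq_univ_sdiff]

lemma poissonWeight_exchange {p : ι → R} {U : Finset ι} {i j : ι} (hi : i ∈ U) (hj : j ∉ U) :
    (1 - p i) * p j * poissonWeight p U
      = p i * (1 - p j) * poissonWeight p (insert j (U.erase i)) := by
  have hij : i ≠ j := ne_of_mem_of_not_mem hi hj
  have hrest : ∀ u ∈ ({i, j} : Finset ι)ᶜ, (if u ∈ U then p u else 1 - p u)
      = if u ∈ insert j (U.erase i) then p u else 1 - p u := by
    intro u hu
    simp only [mem_compl, mem_insert, mem_singleton, not_or] at hu
    simp [hu.1, hu.2]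
  rw [poissonWeight, poissonWeight, ← prod_mul_prod_compl {i, j}, ← prod_mul_prod_compl {i, j},
    prod_pair hij, prod_pair hij, prod_congr rfl hrest]
  simp only [hi, ↓reduceIte, hj, mem_insert, mem_erase, ne_eq, hij, hij.symm, not_true_eq_false,
    and_true, and_false, or_self, or_false, not_false_eq_true]
  ring

lemma sum_poissonWeight_exchange (p : ι → R) (i : ι) (k : ℕ) :
    ∑ U ∈ (powersetCard k univ).filter (i ∈ ·), ∑ j ∈ Uᶜ, (1 - p i) * p j * poissonWeight p U
      = ∑ V ∈ (powersetCard k univ).filter (i ∉ ·), ∑ j ∈ V,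
          p i * (1 - p j) * poissonWeight p V := by
  rw [sum_sigma', sum_sigma']
  refine sum_nbij' (fun x => ⟨insert x.2 (x.1.erase i), x.2⟩)
    (fun y => ⟨insert i (y.1.erase y.2), y.2⟩) ?_ ?_ ?_ ?_ ?_
  · rintro ⟨U, j⟩ h
    simp only [mem_sigma, mem_filter, mem_powersetCard, subset_univ, true_and, mem_compl] at h ⊢
    grind
  · rintro ⟨V, j⟩ h
    simp only [mem_sigma, mem_filter, mem_powersetCard, subset_univ, true_and, mem_compl] at h ⊢
    grind
  · rintro ⟨U, j⟩ h
    simp only [mem_sigma, mem_filter, mem_compl] at h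
    rw [erase_insert (fun hj => h.2 (mem_of_mem_erase hj)), insert_erase h.1.2]
  · rintro ⟨V, j⟩ h
    simp only [mem_sigma, mem_filter] at h
    rw [erase_insert (fun hi => h.1.2 (mem_of_mem_erase hi)), insert_erase h.2]
  · rintro ⟨U, j⟩ h
    simp only [mem_sigma, mem_filter, mem_compl] at h
    exact poissonWeight_exchange h.1.2 h.2

lemma sum_compl_eq_sum_one_sub {p : ι → R} {U : Finset ι} (hp : ∑ u, p u = #U) :
    ∑ u ∈ Uᶜ, p u = ∑ u ∈ U, (1 - p u) := by
  rw [sum_sub_distrib, sum_const, nsmul_one, ← hp, ← sum_add_sum_compl U p]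
  ring

lemma one_sub_mul_sum_filter_mem (p : ι → R) (i : ι) {k : ℕ} (hp : ∑ u, p u = k) :
    (1 - p i) * ∑ U ∈ (powersetCard k univ).filter (i ∈ ·), poissonWeight p U * ∑ j ∈ Uᶜ, p j
      = p i * ∑ V ∈ (powersetCard k univ).filter (i ∉ ·), poissonWeight p V * ∑ j ∈ Vᶜ, p j := by
  calc _ = ∑ U ∈ (powersetCard k univ).filter (i ∈ ·), ∑ j ∈ Uᶜ,
          (1 - p i) * p j * poissonWeight p U := by
        simp only [mul_sum]
        exact sum_congr rfl fun U _ => sum_congr rfl fun j _ => by ring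
    _ = ∑ V ∈ (powersetCard k univ).filter (i ∉ ·), ∑ j ∈ V,
          p i * (1 - p j) * poissonWeight p V := sum_poissonWeight_exchange p i k
    _ = _ := by
        rw [mul_sum]
        refine sum_congr rfl fun V hV => ?_
        have hV : #V = k := (mem_powersetCard.mp (mem_filter.mp hV).1).2
        rw [sum_compl_eq_sum_one_sub (hV ▸ hp), mul_sum, mul_sum]
        exact sum_congr rfl fun j _ => by ring

lemma sum_filter_mem_eq_mul_sum (p : ι → R) (i : ι) {k : ℕ} (hp : ∑ u, p u = k) :
    ∑ U ∈ (powersetCard k univ).filter (i ∈ ·), poissonWeight p U * ∑ j ∈ Uᶜ, p j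
      = p i * ∑ U ∈ powersetCard k univ, poissonWeight p U * ∑ j ∈ Uᶜ, p j := by
  rw [← sum_filter_add_sum_filter_not (powersetCard k univ) (i ∈ ·)]
  linear_combination one_sub_mul_sum_filter_mem p i hp

theorem stmt11_general (n k : ℕ) :
    ∀ p ∈ Ksimplex n k, ∀ i : Fin n,
      ∑ U ∈ (Finset.powersetCard k (Finset.univ : Finset (Fin n))).filter
          (fun U => i ∈ U), gSampford n k U p
        = p i * sumg n k p := by
  rintro p ⟨-, hp⟩ i
  have hg : ∀ U, gSampford n k U p = 1 / ((n : ℝ) - k) * (poissonWeight p U * ∑ j ∈ Uᶜ, p j) :=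
    fun U => by rw [gSampford, poissonWeight_eq_prod_mul_prod_compl]; ring
  simp only [sumg, hg, ← mul_sum]
  rw [sum_filter_mem_eq_mul_sum p i hp]
  ring

theorem stmt11 (n k : ℕ) (hk : 1 ≤ k) (hkn : k < n) :
    ∀ p ∈ Ksimplex n k, ∀ i : Fin n,
      ∑ U ∈ (Finset.powersetCard k (Finset.univ : Finset (Fin n))).filter
          (fun U => i ∈ U), gSampford n k U p
        = p i * sumg n k p :=
  stmt11_general n k
end

section
/- Let n, k be integers with 1 ≤ k < n, K = {p ∈ [0,1]^n : Σ_i p_i = k}, and U ⊆ {1,…,n} with |U| = k. Then for every p ∈ K and every V ⊆ {1,…,n} with |V| = k: g_V(p) ≤ k · Σ_{i∉U} p_i. -/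
/-!
Since `1/(n-k) ≤ 1` and every coordinate of `p` lies in `[0,1]`, we have
`g_V(p) ≤ ∏_{i∉V} (1-p_i) · ∑_{i∉V} p_i`, and the last sum is at most `k`.
For `V = U` the product is at most `1`. Otherwise some `i ∈ U` lies outside `V`, so the product
is at most `1 - p_i`; and `1 - p_i ≤ ∑_{j∉U} p_j` because the other `k - 1` coordinates in `U`
contribute at most `k - 1` to the total mass `k`.
-/

open Finset

lemma one_div_natCast_sub_natCast_le_one (n k : ℕ) : 1 / ((n : ℝ) - k) ≤ 1 := by
  rcases lt_or_ge k n with hkn | hnk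
  · have : (k : ℝ) + 1 ≤ n := by exact_mod_cast hkn
    rw [div_le_one (by linarith)]
    linarith
  · have : (n : ℝ) ≤ k := by exact_mod_cast hnk
    exact (div_nonpos_of_nonneg_of_nonpos zero_le_one (by linarith)).trans zero_le_one

section UnitCube

variable {ι : Type*} {p : ι → ℝ}

lemma prod_one_sub_le_one (hp : ∀ i, 0 ≤ p i ∧ p i ≤ 1) (s : Finset ι) :
    ∏ i ∈ s, (1 - p i) ≤ 1 :=
  prod_le_one (fun i _ ↦ by linarith [hp i]) (fun i _ ↦ by linarith [hp i])

lemma prod_one_sub_le_one_sub_of_mem (hp : ∀ i, 0 ≤ p i ∧ p i ≤ 1) {s : Finset ι} {i : ι}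
    (hi : i ∈ s) : ∏ j ∈ s, (1 - p j) ≤ 1 - p i := by
  classical
  simpa using prod_le_prod_of_subset_of_le_one (singleton_subset_iff.mpr hi)
    (fun j _ ↦ by linarith [hp j]) (fun j _ _ ↦ by linarith [hp j])

variable [Fintype ι] [DecidableEq ι]

lemma one_sub_le_sum_compl_of_mem (hp : ∀ i, 0 ≤ p i ∧ p i ≤ 1) {k : ℕ} (hsum : ∑ i, p i = k)
    {U : Finset ι} (hU : U.card = k) {i : ι} (hi : i ∈ U) :
    1 - p i ≤ ∑ j ∈ Uᶜ, p j := by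
  have hrest : ∑ j ∈ U.erase i, p j ≤ k - 1 := by
    have hcard : ((U.erase i).card : ℝ) = k - 1 := by
      rw [card_erase_of_mem hi, hU, Nat.cast_pred (hU ▸ card_pos.mpr ⟨i, hi⟩)]
    simpa [hcard] using sum_le_card_nsmul (U.erase i) p 1 fun j _ ↦ (hp j).2
  have hsplit := sum_add_sum_compl U p
  rw [← add_sum_erase U p hi, hsum] at hsplit
  linarith

end UnitCube

lemma gSampford_le_prod_mul_sum {n k : ℕ} {p : Fin n → ℝ} (hp : ∀ i, 0 ≤ p i ∧ p i ≤ 1)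
    (V : Finset (Fin n)) :
    gSampford n k V p ≤ (∏ i ∈ Vᶜ, (1 - p i)) * ∑ i ∈ Vᶜ, p i := by
  have hprod_le : ∏ i ∈ V, p i ≤ 1 := prod_le_one (fun i _ ↦ (hp i).1) (fun i _ ↦ (hp i).2)
  calc gSampford n k V p
      ≤ 1 * 1 * (∏ i ∈ Vᶜ, (1 - p i)) * ∑ i ∈ Vᶜ, p i := by
        unfold gSampford
        gcongr
        · exact sum_nonneg fun i _ ↦ (hp i).1
        · exact prod_nonneg fun i _ ↦ by linarith [hp i]
        · exact prod_nonneg fun i _ ↦ (hp i).1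
        · exact one_div_natCast_sub_natCast_le_one n k
    _ = (∏ i ∈ Vᶜ, (1 - p i)) * ∑ i ∈ Vᶜ, p i := by ring

theorem stmt13_general (n k : ℕ) (hk : 1 ≤ k)
    (U : Finset (Fin n)) (hU : U.card = k) :
    ∀ p ∈ Ksimplex n k, ∀ V : Finset (Fin n), V.card = k →
      gSampford n k V p ≤ (k : ℝ) * ∑ i ∈ Uᶜ, p i := by
  rintro p ⟨hp, hsum⟩ V hV
  have hg := gSampford_le_prod_mul_sum (k := k) hp V
  have hV_nonneg : 0 ≤ ∑ i ∈ Vᶜ, p i := sum_nonneg fun i _ ↦ (hp i).1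
  by_cases hVU : V = U
  · subst hVU
    calc gSampford n k V p
        ≤ 1 * ∑ i ∈ Vᶜ, p i := hg.trans <|
          mul_le_mul_of_nonneg_right (prod_one_sub_le_one hp Vᶜ) hV_nonneg
      _ ≤ k * ∑ i ∈ Vᶜ, p i := mul_le_mul_of_nonneg_right (by exact_mod_cast hk) hV_nonneg
  · obtain ⟨i, hiU, hiV⟩ : ∃ i ∈ U, i ∉ V := by
      by_contra! hUV
      exact hVU (eq_of_subset_of_card_le hUV (by rw [hU, hV])).symm
    calc gSampford n k V p
        ≤ (1 - p i) * ∑ j ∈ Vᶜ, p j := hg.trans <| mul_le_mul_of_nonneg_right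
          (prod_one_sub_le_one_sub_of_mem hp (mem_compl.mpr hiV)) hV_nonneg
      _ ≤ (∑ j ∈ Uᶜ, p j) * k := mul_le_mul (one_sub_le_sum_compl_of_mem hp hsum hU hiU)
          (hsum ▸ sum_le_univ_sum_of_nonneg fun j ↦ (hp j).1) hV_nonneg (sum_nonneg fun j _ ↦ (hp j).1)
      _ = k * ∑ j ∈ Uᶜ, p j := mul_comm _ _

theorem stmt13 (n k : ℕ) (hk : 1 ≤ k) (hkn : k < n)
    (U : Finset (Fin n)) (hU : U.card = k) :
    ∀ p ∈ Ksimplex n k, ∀ V : Finset (Fin n), V.card = k →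
      gSampford n k V p ≤ (k : ℝ) * ∑ i ∈ Uᶜ, p i :=
  stmt13_general n k hk U hU
end
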